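/- For all b ∈ [0,1] and p ∈ [0,1], the polynomial ψ(b,p) := 5b⁴ − b⁵ + p − 2b³(4 + p) + b²(4 + 7p − p²) + b(1 − 8p + 2p²) is nonnegative. In particular, ψ(0,p) = p, ψ(1,p) = (1−p)², ψ(b,0) = b + b²(2−b)²(1−b), and ψ(b,1) = (1−b)⁵. -/
import Mathlib


noncomputable def psi (b p : ℝ) : ℝ :=
  5*b^4 - b^5 + p - 2*b^3*(4 + p) + b^2*(4 + 7*p - p^2) + b*(1 - 8*p + 2*p^2)

/-- `ψ(b,p) ≥ 0` on `[0,1]²`, with the stated boundary values. -/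
theorem stmt15 (b p : ℝ) (hb : b ∈ Set.Icc (0:ℝ) 1) (hp : p ∈ Set.Icc (0:ℝ) 1) :
    0 ≤ psi b p ∧
    psi 0 p = p ∧
    psi 1 p = (1 - p)^2 ∧
    psi b 0 = b + b^2*(2 - b)^2*(1 - b) ∧
    psi b 1 = (1 - b)^5 := by
  obtain ⟨hb0, hb1⟩ := hb
  obtain ⟨hp0, hp1⟩ := hp
  refine ⟨?_, by simp [psi], by simp [psi]; ring, by simp [psi]; ring, by simp [psi]; ring⟩
  have h1 : 0 ≤ 1 - b := by linarith
  have h2 : 0 ≤ 1 - p := by linarith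
  have key : psi b p =
      (1-b)^6 * (p*(1-p)) + (1-b)^6 * p^2 + b*(1-b)^5 * (1-p)^2 + b*(1-b)^5 * p^2
      + 9 * (b^2*(1-b)^4) * (1-p)^2 + 18 * (b^3*(1-b)^3) * (1-p)^2
      + 2 * (b^3*(1-b)^3) * (p*(1-p)) + 15 * (b^4*(1-b)^2) * (1-p)^2
      + (b^4*(1-b)^2) * (p*(1-p)) + 6 * (b^5*(1-b)) * (1-p)^2 + b^6 * (1-p)^2 := by
    simp only [psi]; ring
  rw [key]
  have P1 : (0:ℝ) ≤ (1-b)^6 := by positivity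
  have P2 : (0:ℝ) ≤ p*(1-p) := mul_nonneg hp0 h2
  have P3 : (0:ℝ) ≤ (1-p)^2 := sq_nonneg _
  have P4 : (0:ℝ) ≤ p^2 := sq_nonneg _
  have Q1 : (0:ℝ) ≤ b*(1-b)^5 := mul_nonneg hb0 (by positivity)
  have Q2 : (0:ℝ) ≤ b^2*(1-b)^4 := by positivity
  have Q3 : (0:ℝ) ≤ b^3*(1-b)^3 := mul_nonneg (by positivity) (by positivity)
  have Q4 : (0:ℝ) ≤ b^4*(1-b)^2 := by positivity
  have Q5 : (0:ℝ) ≤ b^5*(1-b) := mul_nonneg (by positivity) h1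
  have Q6 : (0:ℝ) ≤ b^6 := by positivity
  nlinarith [mul_nonneg P1 P2, mul_nonneg P1 P4, mul_nonneg Q1 P3, mul_nonneg Q1 P4,
    mul_nonneg Q2 P3, mul_nonneg Q3 P3, mul_nonneg Q3 P2, mul_nonneg Q4 P3,
    mul_nonneg Q4 P2, mul_nonneg Q5 P3, mul_nonneg Q6 P3]
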